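/- For every real X > 0 and every real Y with k - 1/2 ≤ Y ≤ k for some integer k, the sum ∑_{n ∈ ℤ} (n - Y) · exp(-π(n - Y)²/X) is nonnegative. -/

import Mathlib

/-!
Put `t = k - Y ∈ [0, 1/2]` and `x = 1 / X`; the sum is the odd Hurwitz kernel
`∑ₙ (n + t) e^{-π(n+t)²x}`.

For `x ≤ 3` the functional equation turns it into a positive multiple of
`∑_{n ≥ 1} 2n sin(2πnt) e^{-πn²/x}`, whose first term dominates the rest because
`|sin(2πnt)| ≤ n sin(2πt)` and the Gaussian factors decay fast.

For `x > 3` we pair terms of the original sum. If `πtx ≥ 1`, the terms at `n` and `-(n+1)`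
have total `g(n+t) - g(n+1-t) ≥ 0`, where `g(y) = y e^{-πxy²}` decreases on `[1/√(2πx), ∞)`.
If `πtx ≤ 1`, the terms at `n` and `-n` almost cancel, and the sum of their defects is smaller
than the unpaired term `t e^{-πt²x}`.
-/

open Real HurwitzZeta

lemma abs_sin_nat_mul_le (n : ℕ) (θ : ℝ) : |sin (n * θ)| ≤ n * |sin θ| := by
  induction n with
  | zero => simp
  | succ n ih =>
    rw [Nat.cast_succ, add_one_mul, sin_add]
    calc |sin (n * θ) * cos θ + cos (n * θ) * sin θ|
        ≤ |sin (n * θ)| * |cos θ| + |cos (n * θ)| * |sin θ| := by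
          rw [← abs_mul, ← abs_mul]; exact abs_add_le _ _
      _ ≤ |sin (n * θ)| * 1 + 1 * |sin θ| := by
          gcongr
          · exact abs_cos_le_one θ
          · exact abs_cos_le_one _
      _ ≤ (n + 1) * |sin θ| := by linarith

lemma tsum_sq_mul_pow_le {r : ℝ} (hr : 0 ≤ r) (hr4 : 4 * r < 1) :
    ∑' n : ℕ, (n : ℝ) ^ 2 * r ^ n ≤ r / (1 - 4 * r) := by
  have hsum : Summable fun n : ℕ ↦ (n : ℝ) ^ 2 * r ^ n :=
    summable_pow_mul_geometric_of_norm_lt_one 2 (by rw [norm_of_nonneg hr]; linarith)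
  have hgeom : Summable fun n : ℕ ↦ r * (4 * r) ^ n :=
    (summable_geometric_of_lt_one (by positivity) hr4).mul_left r
  have hle (n : ℕ) : ((n + 1 : ℕ) : ℝ) ^ 2 * r ^ (n + 1) ≤ r * (4 * r) ^ n := by
    have h2 : ((n + 1 : ℕ) : ℝ) ≤ 2 ^ n := by exact_mod_cast Nat.lt_two_pow_self
    calc ((n + 1 : ℕ) : ℝ) ^ 2 * r ^ (n + 1) ≤ ((2 : ℝ) ^ n) ^ 2 * r ^ (n + 1) := by gcongr
      _ = r * (4 * r) ^ n := by rw [← pow_mul, mul_comm n, pow_mul, mul_pow]; ring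
  calc ∑' n : ℕ, (n : ℝ) ^ 2 * r ^ n
      = ∑' n : ℕ, ((n + 1 : ℕ) : ℝ) ^ 2 * r ^ (n + 1) := by
        rw [hsum.tsum_eq_zero_add]; simp
    _ ≤ ∑' n : ℕ, r * (4 * r) ^ n :=
        Summable.tsum_le_tsum hle ((summable_nat_add_iff 1).2 hsum) hgeom
    _ = r / (1 - 4 * r) := by
        rw [tsum_mul_left, tsum_geometric_of_lt_one (by positivity) hr4, div_eq_mul_inv]

lemma tsum_le_of_le_sq_mul_pow {f : ℕ → ℝ} {C r : ℝ} (hC : 0 ≤ C) (hr : 0 ≤ r)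
    (hr4 : 4 * r < 1) (hf0 : ∀ n, 0 ≤ f n) (hf : ∀ n, f n ≤ C * ((n : ℝ) ^ 2 * r ^ n)) :
    Summable f ∧ ∑' n, f n ≤ C * (r / (1 - 4 * r)) := by
  have hsum : Summable fun n : ℕ ↦ C * ((n : ℝ) ^ 2 * r ^ n) :=
    (summable_pow_mul_geometric_of_norm_lt_one 2
      (by rw [norm_of_nonneg hr]; linarith)).mul_left C
  refine ⟨hsum.of_nonneg_of_le hf0 hf, ?_⟩
  calc ∑' n, f n ≤ ∑' n : ℕ, C * ((n : ℝ) ^ 2 * r ^ n) :=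
        Summable.tsum_le_tsum hf (hsum.of_nonneg_of_le hf0 hf) hsum
    _ ≤ C * (r / (1 - 4 * r)) := by
        rw [tsum_mul_left]; exact mul_le_mul_of_nonneg_left (tsum_sq_mul_pow_le hr hr4) hC

lemma nat_sub_one_mul_sub_two_nonneg (n : ℕ) : 0 ≤ ((n : ℝ) - 1) * ((n : ℝ) - 2) := by
  rcases le_or_gt n 1 with hn | hn
  · have : (n : ℝ) ≤ 1 := by exact_mod_cast hn
    nlinarith
  · have : (2 : ℝ) ≤ n := by exact_mod_cast hn
    nlinarith

lemma summable_and_tsum_sq_mul_exp_le {X : ℝ} (hX : 1 / 3 ≤ X) :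
    Summable (fun n : ℕ ↦ (n : ℝ) ^ 2 * rexp (-π * n ^ 2 * X)) ∧
      ∑' n : ℕ, (n : ℝ) ^ 2 * rexp (-π * n ^ 2 * X) ≤ 2 * rexp (-π * X) := by
  have hπX : 1 ≤ π * X := by nlinarith [pi_gt_three]
  set r := rexp (-(3 * π * X))
  have hr8 : 8 * r ≤ 1 := by
    calc 8 * r ≤ 8 * rexp (-3) := by
          have : r ≤ rexp (-3) := exp_le_exp.2 (by linarith)
          linarith
      _ ≤ 1 := by
        rw [exp_neg, ← div_eq_mul_inv, div_le_one (exp_pos 3)]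
        linarith [quadratic_le_exp_of_nonneg (x := 3) (by norm_num)]
  -- `n² - 3n + 2 ≥ 0` on `ℕ` lets the geometric ratio `e^{-3πX}` absorb `e^{-πn²X}`
  have hle (n : ℕ) : (n : ℝ) ^ 2 * rexp (-π * n ^ 2 * X) ≤
      rexp (2 * π * X) * ((n : ℝ) ^ 2 * r ^ n) := by
    rw [mul_left_comm, ← exp_nat_mul, ← exp_add]
    gcongr
    nlinarith [nat_sub_one_mul_sub_two_nonneg n, pi_pos]
  obtain ⟨hsum, hbound⟩ := tsum_le_of_le_sq_mul_pow (exp_pos _).le (exp_pos _).le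
    (by linarith) (fun n ↦ by positivity) hle
  refine ⟨hsum, hbound.trans ?_⟩
  have hCr : rexp (2 * π * X) * r = rexp (-π * X) := by rw [← exp_add]; ring_nf
  rw [← mul_div_assoc, hCr, div_le_iff₀ (by linarith)]
  nlinarith [exp_pos (-π * X)]

lemma sinKernel_nonneg {t X : ℝ} (ht0 : 0 ≤ t) (ht1 : t ≤ 1 / 2) (hX : 1 / 3 ≤ X) :
    0 ≤ sinKernel t X := by
  set s := sin (2 * π * t) with hs_def
  set E : ℕ → ℝ := fun n ↦ (n : ℝ) ^ 2 * rexp (-π * n ^ 2 * X)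
  have hs : 0 ≤ s := sin_nonneg_of_nonneg_of_le_pi (by positivity) (by nlinarith [pi_pos])
  obtain ⟨hEsum, hEle⟩ := summable_and_tsum_sq_mul_exp_le hX
  have hlow (n : ℕ) : (if n = 1 then 4 * s * rexp (-π * X) else 0) - 2 * s * E n ≤
      2 * n * sin (2 * π * t * n) * rexp (-π * n ^ 2 * X) := by
    rcases eq_or_ne n 1 with rfl | hn
    · simp only [E, if_pos, Nat.cast_one, one_pow, mul_one, ← hs_def]
      linarith
    · have h := abs_sin_nat_mul_le n (2 * π * t)
      rw [abs_of_nonneg hs, mul_comm (n : ℝ)] at h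
      simp only [E, if_neg hn, zero_sub]
      have := mul_le_mul_of_nonneg_left (neg_le_of_abs_le h)
        (by positivity : 0 ≤ 2 * (n : ℝ) * rexp (-π * n ^ 2 * X))
      nlinarith
  have := hasSum_le hlow ((hasSum_ite_eq 1 _).sub (hEsum.hasSum.mul_left (2 * s)))
    (hasSum_nat_sinKernel t (by linarith))
  nlinarith [mul_le_mul_of_nonneg_left hEle hs]

lemma mul_exp_neg_mul_sq_le_of_le {a b c : ℝ} (ha : 0 < a) (hab : a ≤ b)
    (h : 1 ≤ c * a * (a + b)) : b * rexp (-c * b ^ 2) ≤ a * rexp (-c * a ^ 2) := by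
  have hb : b ≤ a * rexp (c * (b ^ 2 - a ^ 2)) := by
    have := add_one_le_exp (c * (b ^ 2 - a ^ 2))
    nlinarith [mul_le_mul_of_nonneg_left h (sub_nonneg.2 hab)]
  calc b * rexp (-c * b ^ 2) ≤ a * rexp (c * (b ^ 2 - a ^ 2)) * rexp (-c * b ^ 2) := by gcongr
    _ = a * rexp (-c * a ^ 2) := by rw [mul_assoc, ← exp_add]; ring_nf

lemma oddKernel_nonneg_of_one_le {t x : ℝ} (hx : 0 < x) (ht : t ≤ 1 / 2) (h : 1 ≤ π * t * x) :
    0 ≤ oddKernel t x := by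
  have ht0 : 0 < t := by
    by_contra! ht0
    nlinarith [mul_pos pi_pos hx]
  refine hasSum_le (fun n ↦ ?_) hasSum_zero (hasSum_int_oddKernel t hx).nat_add_neg_add_one
  have hslack : 0 ≤ π * x * ((n : ℝ) * (2 * n + 1 + 2 * t)) := by positivity
  have key := mul_exp_neg_mul_sq_le_of_le (a := n + t) (b := n + 1 - t) (c := π * x)
    (by positivity) (by linarith) (by nlinarith)
  push_cast
  have e1 : -π * ((n : ℝ) + t) ^ 2 * x = -(π * x) * ((n : ℝ) + t) ^ 2 := by ring
  have e2 : -π * (-((n : ℝ) + 1) + t) ^ 2 * x = -(π * x) * ((n : ℝ) + 1 - t) ^ 2 := by ring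
  rw [e1, e2]
  linarith

lemma mul_exp_neg_mul_sq_sub_le {N t c : ℝ} (hc : 0 ≤ c) (ht : 0 ≤ t) (htN : t ≤ N) :
    (N - t) * rexp (-c * (N - t) ^ 2) - (N + t) * rexp (-c * (N + t) ^ 2) ≤
      4 * c * t * N ^ 2 * rexp (-c * (N - t) ^ 2) := by
  have hu : 0 ≤ 4 * c * N * t := by have := ht.trans htN; positivity
  have hsplit :
      rexp (-c * (N + t) ^ 2) = rexp (-c * (N - t) ^ 2) * rexp (-(4 * c * N * t)) := by
    rw [← exp_add]; ring_nf
  set A := rexp (-c * (N - t) ^ 2)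
  set u := 4 * c * N * t
  have hexp : 1 - rexp (-u) ≤ u := by linarith [add_one_le_exp (-u)]
  have hA : 0 ≤ A := (exp_pos _).le
  rw [hsplit]
  calc (N - t) * A - (N + t) * (A * rexp (-u)) ≤ (N - t) * A * (1 - rexp (-u)) := by
        nlinarith [mul_nonneg ht (mul_nonneg hA (exp_pos (-u)).le)]
    _ ≤ (N - t) * A * u := by gcongr
    _ ≤ 4 * c * t * N ^ 2 * A := by
        nlinarith [mul_nonneg (mul_nonneg hA hu) ht]

lemma four_mul_add_one_mul_exp_two_sub_le {y : ℝ} (hy : 9 ≤ y) :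
    4 * (y + 1) * rexp (2 - y) ≤ 1 := by
  have hcube := pow_div_factorial_le_exp (x := y - 2) (by linarith) 3
  rw [exp_sub, ← mul_div_assoc, div_le_one (exp_pos y)]
  calc 4 * (y + 1) * rexp 2 ≤ (y - 2) ^ 3 / (Nat.factorial 3) * rexp 2 := by
        gcongr
        norm_num [Nat.factorial]
        nlinarith [mul_nonneg (mul_nonneg (by linarith : (0 : ℝ) ≤ y - 2)
          (by linarith : (0 : ℝ) ≤ y - 9)) (by linarith : (0 : ℝ) ≤ y + 5)]
    _ ≤ rexp (y - 2) * rexp 2 := by gcongr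
    _ = rexp y := by rw [← exp_add]; ring_nf

lemma oddKernel_nonneg_of_le_one {t x : ℝ} (hx : 3 ≤ x) (ht : 0 ≤ t) (h : π * t * x ≤ 1) :
    0 ≤ oddKernel t x := by
  have hx0 : 0 < x := by linarith
  have hπx : 9 ≤ π * x := by nlinarith [pi_gt_three]
  have hw := four_mul_add_one_mul_exp_two_sub_le hπx
  set w := rexp (2 - π * x)
  have hw0 : 0 < w := exp_pos _
  have hw4 : 4 * w < 1 := by nlinarith
  set E : ℕ → ℝ := fun n ↦ (n : ℝ) ^ 2 * rexp (-π * (n - t) ^ 2 * x)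
  have hEle (n : ℕ) : E n ≤ rexp (-π * t ^ 2 * x) * ((n : ℝ) ^ 2 * w ^ n) := by
    have hn : (n : ℝ) ≤ n ^ 2 := by exact_mod_cast Nat.le_self_pow two_ne_zero n
    simp only [E]
    rw [mul_left_comm, ← exp_nat_mul, ← exp_add]
    gcongr
    nlinarith [mul_nonneg (by positivity : 0 ≤ π * x) (sub_nonneg.2 hn),
      mul_nonneg (Nat.cast_nonneg n : (0 : ℝ) ≤ n) (sub_nonneg.2 h)]
  obtain ⟨hEsum, hEbound⟩ := tsum_le_of_le_sq_mul_pow (exp_pos _).le hw0.le hw4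
    (fun n ↦ by positivity) hEle
  set c₀ := t * rexp (-π * t ^ 2 * x)
  have hpair (n : ℕ) : (if n = 0 then 2 * c₀ else 0) - 4 * π * t * x * E n ≤
      (((n : ℤ) : ℝ) + t) * rexp (-π * (((n : ℤ) : ℝ) + t) ^ 2 * x) +
        (((-n : ℤ) : ℝ) + t) * rexp (-π * (((-n : ℤ) : ℝ) + t) ^ 2 * x) := by
    rcases Nat.eq_zero_or_pos n with rfl | hn
    · simp [E, c₀, two_mul]
    · have hn1 : (1 : ℝ) ≤ n := by exact_mod_cast hn
      have key := mul_exp_neg_mul_sq_sub_le (N := n) (c := π * x) (by positivity) ht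
        (by nlinarith)
      simp only [E, if_neg hn.ne', Int.cast_natCast, Int.cast_neg]
      have e1 : -π * ((n : ℝ) - t) ^ 2 * x = -(π * x) * ((n : ℝ) - t) ^ 2 := by ring
      have e2 : -π * ((n : ℝ) + t) ^ 2 * x = -(π * x) * ((n : ℝ) + t) ^ 2 := by ring
      have e3 : -π * (-(n : ℝ) + t) ^ 2 * x = -(π * x) * ((n : ℝ) - t) ^ 2 := by ring
      rw [e1, e2, e3]
      linarith
  have hsum := hasSum_le hpair ((hasSum_ite_eq 0 _).sub (hEsum.hasSum.mul_left _))
    (hasSum_int_oddKernel t hx0).nat_add_neg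
  have hloss : 4 * π * t * x * ∑' n, E n ≤ c₀ := by
    calc 4 * π * t * x * ∑' n, E n
        ≤ 4 * π * t * x * (rexp (-π * t ^ 2 * x) * (w / (1 - 4 * w))) := by gcongr
      _ = c₀ * (4 * (π * x) * w / (1 - 4 * w)) := by ring
      _ ≤ c₀ * 1 := by
          gcongr
          rw [div_le_one (by linarith)]
          nlinarith
      _ = c₀ := mul_one c₀
  simp only [Int.cast_zero, zero_add] at hsum
  linarith

theorem oddKernel_nonneg {t x : ℝ} (ht0 : 0 ≤ t) (ht1 : t ≤ 1 / 2) (hx : 0 < x) :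
    0 ≤ oddKernel t x := by
  rcases le_or_gt x 3 with hx3 | hx3
  · rw [oddKernel_functional_equation]
    refine mul_nonneg (by positivity) (sinKernel_nonneg ht0 ht1 ?_)
    rw [le_one_div (by norm_num) hx]
    linarith
  · rcases le_total 1 (π * t * x) with h | h
    · exact oddKernel_nonneg_of_one_le hx ht1 h
    · exact oddKernel_nonneg_of_le_one hx3.le ht0 h

theorem sum_nonneg_of_mem_right_half
    (X Y : ℝ) (hX : 0 < X) (k : ℤ) (h1 : (k : ℝ) - 1/2 ≤ Y) (h2 : Y ≤ (k : ℝ)) :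
    0 ≤ (∑' n : ℤ, ((n : ℝ) - Y) * Real.exp (-Real.pi * ((n : ℝ) - Y)^2 / X)) := by
  have hsum : HasSum (fun n : ℤ ↦ ((n : ℝ) - Y) * rexp (-π * ((n : ℝ) - Y) ^ 2 / X))
      (oddKernel ↑((k : ℝ) - Y) (1 / X)) := by
    rw [← (Equiv.addRight k).hasSum_iff]
    convert hasSum_int_oddKernel ((k : ℝ) - Y) (one_div_pos.2 hX) using 2 with n
    simp only [Function.comp_apply, Equiv.coe_addRight, Int.cast_add]
    ring_nf
  rw [hsum.tsum_eq]
  exact oddKernel_nonneg (by linarith) (by linarith) (one_div_pos.2 hX)
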